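/- Let V be a ℚ-algebra and let k be a positive integer. Let π₀, π₁, …, πₙ be idempotents in V such that πᵢ·πⱼ = 0 whenever i − j < k and i ≠ j. For each i define pᵢ := (1 − ½πₙ)·(1 − ½π₍ₙ₋₁₎)⋯(1 − ½π₍ᵢ₊₁₎) · πᵢ · (1 − ½π₍ᵢ₋₁₎)⋯(1 − ½π₁)·(1 − ½π₀). Then each pᵢ is idempotent, and pᵢ·pⱼ = 0 whenever i − j < k + 1 and i ≠ j. -/

import Mathlib

/-- One step of the non-commutative Gram–Schmidt process:
`gs n π i = (1 − ½πₙ)⋯(1 − ½π₍ᵢ₊₁₎) · πᵢ · (1 − ½π₍ᵢ₋₁₎)⋯(1 − ½π₀)`,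
where the factors in each product are taken with decreasing index from left to right. -/
def gs {V : Type*} [Ring V] [Algebra ℚ V] (n : ℕ) (π : ℕ → V) (i : ℕ) : V :=
  (((List.range (n - i)).map (fun k => (1 : V) - ((2 : ℚ)⁻¹) • π (n - k))).prod)
    * π i *
  (((List.range i).map (fun k => (1 : V) - ((2 : ℚ)⁻¹) • π (i - 1 - k))).prod)

/-!
Write `uₘ = 1 − ½πₘ`, so that `pᵢ = Lᵢ πᵢ Rᵢ` with `Lᵢ = uₙ⋯uᵢ₊₁` and `Rᵢ = uᵢ₋₁⋯u₀`; both claims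
reduce to `πᵢ Rᵢ Lⱼ πⱼ = δᵢⱼ πᵢ` for `i ≤ j + k`. Right multiplication by `u_c` fixes an idempotent
`π_b` orthogonal to `π_c` and halves `π_c` itself, so for `b ≤ j + k` the product `π_b Lⱼ πⱼ` is
`π_b πⱼ` when `b ≤ j` and `½ π_b πⱼ` when `j < b`. Hence the factors `u_c` of `Rᵢ` with `c < j`
fix `Lⱼ πⱼ`, those with `j < c < i` are absorbed by `πᵢ`, and the remaining factor `uⱼ` (present
when `j < i`) turns `πᵢ Lⱼ πⱼ = ½ πᵢ πⱼ` into `½ πᵢ πⱼ − ½ πᵢ πⱼ = 0`.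
-/

namespace GramSchmidt

variable {V : Type*} [Ring V] [Algebra ℚ V]

/-- `descProd π a m = (1 − ½π₍ₐ₊ₘ₋₁₎)⋯(1 − ½πₐ)`. -/
def descProd (π : ℕ → V) (a : ℕ) : ℕ → V
  | 0 => 1
  | m + 1 => (1 - (2 : ℚ)⁻¹ • π (a + m)) * descProd π a m

lemma list_prod_eq_descProd (π : ℕ → V) (a m : ℕ) :
    ((List.range m).map (fun t => (1 : V) - (2 : ℚ)⁻¹ • π (a + m - 1 - t))).prod =
      descProd π a m := by
  induction m with
  | zero => rfl
  | succ m ih =>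
    rw [List.prod_range_succ', descProd, ← ih]
    simp only [show a + (m + 1) - 1 - 0 = a + m by omega,
      show ∀ t, a + (m + 1) - 1 - (t + 1) = a + m - 1 - t by omega]

lemma gs_eq_descProd (n : ℕ) (π : ℕ → V) {i : ℕ} (hi : i ≤ n) :
    gs n π i = descProd π (i + 1) (n - i) * π i * descProd π 0 i := by
  rw [gs, ← list_prod_eq_descProd, ← list_prod_eq_descProd,
    show i + 1 + (n - i) - 1 = n by omega, zero_add]

lemma descProd_add (π : ℕ → V) (a m l : ℕ) :
    descProd π a (m + l) = descProd π (a + m) l * descProd π a m := by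
  induction l with
  | zero => rw [descProd, one_mul, add_zero]
  | succ l ih => rw [← add_assoc, descProd, ih, descProd, ← mul_assoc, add_assoc]

lemma mul_one_sub_half_smul_of_mul_eq_zero {x p : V} (h : x * p = 0) :
    x * (1 - (2 : ℚ)⁻¹ • p) = x := by
  rw [mul_sub, mul_one, mul_smul_comm, h, smul_zero, sub_zero]

lemma one_sub_half_smul_mul_of_mul_eq_zero {p y : V} (h : p * y = 0) :
    (1 - (2 : ℚ)⁻¹ • p) * y = y := by
  rw [sub_mul, one_mul, smul_mul_assoc, h, smul_zero, sub_zero]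

lemma mul_one_sub_half_smul_self {p : V} (h : IsIdempotentElem p) :
    p * (1 - (2 : ℚ)⁻¹ • p) = (2 : ℚ)⁻¹ • p := by
  rw [mul_sub, mul_one, mul_smul_comm, h.eq]
  module

lemma mul_descProd {π : ℕ → V} {a b m : ℕ} (hb : IsIdempotentElem (π b))
    (horth : ∀ c, a ≤ c → c < a + m → c ≠ b → π b * π c = 0) :
    π b * descProd π a m = (if a ≤ b ∧ b < a + m then (2 : ℚ)⁻¹ else 1) • π b := by
  induction m with
  | zero => rw [descProd, mul_one, if_neg (by omega), one_smul]
  | succ m ih =>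
    have ih' := ih fun c hc _ hcb => horth c hc (by omega) hcb
    rw [descProd, ← mul_assoc]
    by_cases hbm : b = a + m
    · subst hbm
      rw [mul_one_sub_half_smul_self hb, smul_mul_assoc, ih', if_neg (by omega),
        if_pos (by omega), one_smul]
    · rw [mul_one_sub_half_smul_of_mul_eq_zero (horth _ (by omega) (by omega) (Ne.symm hbm)),
        ih']
      congr 1
      exact if_congr (by omega) rfl rfl

lemma descProd_mul_of_forall_mul_eq_zero {π : ℕ → V} {a m : ℕ} {y : V}
    (h : ∀ c, a ≤ c → c < a + m → π c * y = 0) : descProd π a m * y = y := by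
  induction m with
  | zero => rw [descProd, one_mul]
  | succ m ih =>
    rw [descProd, mul_assoc, ih fun c hc _ => h c hc (by omega),
      one_sub_half_smul_mul_of_mul_eq_zero (h _ (by omega) (by omega))]

section Orthogonal

variable {n k : ℕ} {π : ℕ → V} (hidem : ∀ i, i ≤ n → π i * π i = π i)
  (horth : ∀ i, i ≤ n → ∀ j, j ≤ n → i ≠ j → i < j + k → π i * π j = 0)
include hidem horth

lemma mul_descProd_mul {b j : ℕ} (hb : b ≤ n) (hbj : b ≤ j + k) :
    π b * (descProd π (j + 1) (n - j) * π j) =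
      (if j < b then (2 : ℚ)⁻¹ else 1) • (π b * π j) := by
  rw [← mul_assoc, mul_descProd (hidem b hb) fun c _ _ hcb => horth b hb c (by omega)
    (Ne.symm hcb) (by omega), smul_mul_assoc]
  congr 1
  exact if_congr (by omega) rfl rfl

lemma mul_descProd_mul_descProd_mul {i j : ℕ} (hi : i ≤ n) (hj : j ≤ n) (hij : i ≤ j + k) :
    π i * descProd π 0 i * (descProd π (j + 1) (n - j) * π j) = if i = j then π i else 0 := by
  set y := descProd π (j + 1) (n - j) * π j
  have hbelow : ∀ b, b < j → π b * y = 0 := fun b hb => by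
    rw [mul_descProd_mul hidem horth (by omega) (by omega), if_neg (by omega),
      horth b (by omega) j hj (by omega) (by omega), smul_zero]
  have hself : π j * y = π j := by
    rw [mul_descProd_mul hidem horth hj (by omega), if_neg (lt_irrefl j), one_smul, hidem j hj]
  by_cases hle : i ≤ j
  · rw [mul_assoc, descProd_mul_of_forall_mul_eq_zero fun c _ hc => hbelow c (by omega)]
    rcases hle.eq_or_lt with rfl | hlt
    · rw [if_pos rfl, hself]
    · rw [if_neg hlt.ne, mul_descProd_mul hidem horth hi hij, horth i hi j hj hlt.ne (by omega),
        smul_zero]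
  · have hsplit : descProd π 0 i =
        descProd π (j + 1) (i - (j + 1)) * ((1 - (2 : ℚ)⁻¹ • π j) * descProd π 0 j) := by
      obtain ⟨m, rfl⟩ : ∃ m, i = j + 1 + m := ⟨i - (j + 1), by omega⟩
      rw [descProd_add, zero_add, descProd, zero_add, Nat.add_sub_cancel_left]
    have hfix : π i * descProd π (j + 1) (i - (j + 1)) = π i := by
      rw [mul_descProd (hidem i hi) fun c _ _ hc => horth i hi c (by omega) (Ne.symm hc)
        (by omega), if_neg (by omega), one_smul]
    calc π i * descProd π 0 i * y
        = π i * descProd π (j + 1) (i - (j + 1)) *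
            ((1 - (2 : ℚ)⁻¹ • π j) * (descProd π 0 j * y)) := by
          rw [hsplit]
          simp only [mul_assoc]
      _ = π i * y - (2 : ℚ)⁻¹ • (π i * (π j * y)) := by
          rw [hfix, descProd_mul_of_forall_mul_eq_zero fun c _ hc => hbelow c (by omega),
            sub_mul, one_mul, mul_sub, smul_mul_assoc, mul_smul_comm]
      _ = 0 := by
          rw [hself, mul_descProd_mul hidem horth hi hij, if_pos (by omega), sub_self]
      _ = if i = j then π i else 0 := (if_neg (by omega)).symm

lemma gs_mul_gs {i j : ℕ} (hi : i ≤ n) (hj : j ≤ n) (hij : i ≤ j + k) :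
    gs n π i * gs n π j = if i = j then gs n π i else 0 := by
  calc gs n π i * gs n π j
      = descProd π (i + 1) (n - i) *
          (π i * descProd π 0 i * (descProd π (j + 1) (n - j) * π j)) * descProd π 0 j := by
        rw [gs_eq_descProd n π hi, gs_eq_descProd n π hj]
        simp only [mul_assoc]
    _ = if i = j then gs n π i else 0 := by
        rw [mul_descProd_mul_descProd_mul hidem horth hi hj hij]
        split_ifs with h
        · rw [h, gs_eq_descProd n π hj, mul_assoc]
        · rw [mul_zero, zero_mul]

end Orthogonal

end GramSchmidt

theorem stmt_0 {V : Type*} [Ring V] [Algebra ℚ V] (n k : ℕ) (π : ℕ → V)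
    (hidem : ∀ i, i ≤ n → π i * π i = π i)
    (horth : ∀ i j, i ≤ n → j ≤ n → i ≠ j → (i : ℤ) - (j : ℤ) < (k : ℤ) →
      π i * π j = 0) :
    (∀ i, i ≤ n → gs n π i * gs n π i = gs n π i) ∧
    (∀ i j, i ≤ n → j ≤ n → i ≠ j → (i : ℤ) - (j : ℤ) < (k : ℤ) + 1 →
      gs n π i * gs n π j = 0) := by
  have horth' : ∀ i, i ≤ n → ∀ j, j ≤ n → i ≠ j → i < j + k → π i * π j = 0 :=
    fun i hi j hj hij h => horth i j hi hj hij (by omega)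
  refine ⟨fun i hi => ?_, fun i j hi hj hij h => ?_⟩
  · rw [GramSchmidt.gs_mul_gs hidem horth' hi hi (by omega), if_pos rfl]
  · rw [GramSchmidt.gs_mul_gs hidem horth' hi hj (by omega), if_neg hij]
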